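/- The operators e_i^T = Ẽ(i) on N satisfy the Serre relations of type Ã_{n−1}: if j ∈ ℤ/nℤ with j ≠ i and j ≠ i±1, then [e_i^T, e_j^T] = 0; if n ≠ 2 and j = i±1, then [e_i^T, [e_i^T, e_j^T]] = 0; and if n = 2 and j = i+1, then [e_i^T, [e_i^T, [e_i^T, e_j^T]]] = 0. -/
import Mathlib


/-!
Common setup: raiz for the cyclic quiver `Ã_{n-1}`, the polynomial algebra
`N = ℚ[x_θ : θ ∈ R⁺(n)]`, and the locally finite differential operators
`E(θ)`, `Ẽ(θ)`, `B(θ)`, `𝔅_i`, `𝔈_i`, `Δ_i`, and the Chevalley operators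
`e_i^T`, `h_i^T`, `f_i^T`, following Finkelberg–Kuznetsov.
-/

open MvPolynomial

/-- A raiz for the cyclic quiver with `n` vertices: a pair `(p,q)` of integers with
`p ≤ q`, modulo simultaneous translation of both entries by `n`; it is faithfully
encoded by the ending class `q mod n : ZMod n` together with the (positive) length
`q - p + 1 : ℕ+`. -/
abbrev Raiz (n : ℕ) : Type := ZMod n × ℕ+

namespace Raiz

variable {n : ℕ}

/-- The class at which a raiz begins: for `(p,q)` this is `p mod n = (q - len + 1) mod n`. -/
def beg (θ : Raiz n) : ZMod n := θ.1 - ((θ.2 : ℕ) : ZMod n) + 1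

/-- `θ = (p,q)` ends at `i` iff `q ≡ i (mod n)`. -/
def Ends (θ : Raiz n) (i : ZMod n) : Prop := θ.1 = i

/-- `θ = (p,q)` begins at `i` iff `p ≡ i (mod n)`. -/
def Begins (θ : Raiz n) (i : ZMod n) : Prop := beg θ = i

/-- The simple raiz `(i,i)`. -/
def simple (i : ZMod n) : Raiz n := (i, 1)

/-- The concatenation `ϑ⌣θ`: it is defined (`some`) exactly when `θ` begins at the
class following the class at which `ϑ` ends; for `ϑ = (a,b)` ending at `i-1` and
`θ = (p,q)` beginning at `i` it is `(a, b+q-p+1)`, i.e. it ends where `θ` ends and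
its length is the sum of the lengths. -/
def cat (ϑ θ : Raiz n) : Option (Raiz n) :=
  if beg θ = ϑ.1 + 1 then some (θ.1, ϑ.2 + θ.2) else none

/-- `dimAt θ j` is the number of integers in `[p,q]` congruent to `j` mod `n`:
the dimension vector `dim θ ∈ ℕ^{ℤ/nℤ}` of the raiz `θ`. -/
def dimAt (θ : Raiz n) (j : ZMod n) : ℕ :=
  ((Finset.range (θ.2 : ℕ)).filter (fun t => θ.1 - ((t : ℕ) : ZMod n) = j)).card

end Raiz

/-- The polynomial algebra `N = ℚ[x_θ : θ ∈ R⁺(n)]`. -/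
abbrev Pol (n : ℕ) := MvPolynomial (Raiz n) ℚ

/-- Operators on `N`. -/
abbrev Op (n : ℕ) := Pol n → Pol n

noncomputable section

/-- The locally finite differential operator `Σ_η c(η)·∂/∂x_η`: applied to a
polynomial `P` only the (finitely many) variables occurring in `P` contribute,
since `∂P/∂x_η = 0` for `η ∉ vars P`. -/
def diffOp {n : ℕ} (c : Raiz n → Pol n) : Op n :=
  fun P => ∑ η ∈ P.vars, c η * pderiv η P

/-- `Ẽ(θ) = Σ_{ϑ ∈ E_{i-1}} x_ϑ ∂/∂x_{ϑ⌣θ}` for a raiz `θ` beginning at `i`: the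
term `ϑ = 0` contributes `∂/∂x_θ` (as `x_0 = 1` and `0⌣θ = θ`), and a nonzero `ϑ`
ending at `i-1` contributes at the variable `η = ϑ⌣θ`, i.e. at `η` with the same
end as `θ` and `len η > len θ`, with coefficient `x_ϑ`, where
`ϑ = (beg θ - 1, len η - len θ)`. -/
def Etil {n : ℕ} (θ : Raiz n) : Op n :=
  diffOp (fun η =>
    if η = θ then 1
    else if η.1 = θ.1 ∧ θ.2 < η.2 then X ((Raiz.beg θ - 1, η.2 - θ.2) : Raiz n) else 0)

/-- `E(θ) = Σ_{ϑ ∈ E_{i-1}} x_{ϑ⌣θ} ∂/∂x_ϑ` for a raiz `θ` beginning at `i`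
(the `ϑ = 0` term vanishes since `∂/∂x_0 = 0`). -/
def Eop {n : ℕ} (θ : Raiz n) : Op n :=
  diffOp (fun ϑ => if ϑ.1 = Raiz.beg θ - 1 then X ((θ.1, ϑ.2 + θ.2) : Raiz n) else 0)

/-- `B(θ) = Σ_{ϑ ∈ B_{i+1}} x_{θ⌣ϑ} ∂/∂x_ϑ` for a raiz `θ` ending at `i`
(the `ϑ = 0` term vanishes since `∂/∂x_0 = 0`). -/
def Bop {n : ℕ} (θ : Raiz n) : Op n :=
  diffOp (fun ϑ => if Raiz.beg ϑ = θ.1 + 1 then X ((ϑ.1, θ.2 + ϑ.2) : Raiz n) else 0)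

/-- `𝔅_i = Σ_{0 ≠ θ ∈ B_{i+1}} x_θ ∂/∂x_θ`. -/
def Bfrak {n : ℕ} (i : ZMod n) : Op n :=
  diffOp (fun θ => if Raiz.beg θ = i + 1 then X θ else 0)

/-- `𝔈_i = Σ_{0 ≠ θ ∈ E_{i-1}} x_θ ∂/∂x_θ`. -/
def Efrak {n : ℕ} (i : ZMod n) : Op n :=
  diffOp (fun θ => if θ.1 = i - 1 then X θ else 0)

/-- The commutator `[f,g] = f∘g - g∘f` of two operators. -/
def brak {n : ℕ} (f g : Op n) : Op n := fun P => f (g P) - g (f P)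

/-- Multiplication by `x_θ` as an operator on `N`. -/
def mulX {n : ℕ} (θ : Raiz n) : Op n := fun P => X θ * P

/-- Extend a raiz-indexed family of operators to `Option (Raiz n)`: a term with
an undefined concatenation is declared to be `0`. -/
def opt {n : ℕ} (F : Raiz n → Op n) : Option (Raiz n) → Op n
  | none => 0
  | some θ => F θ

/-- `Δ_i = 𝔅_{i-1} - 𝔅_i + c_i`, for a fixed family of constants `c`. -/
def Delta {n : ℕ} (c : ZMod n → ℚ) (i : ZMod n) : Op n :=
  fun P => Bfrak (i - 1) P - Bfrak i P + c i • P

/-- The Chevalley operator `e_i^T = Ẽ(i)`. -/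
def eT {n : ℕ} (i : ZMod n) : Op n := Etil (Raiz.simple i)

/-- The Chevalley operator `h_i^T = 𝔈_{i+1} - 𝔈_i + Δ_i`. -/
def hT {n : ℕ} (c : ZMod n → ℚ) (i : ZMod n) : Op n :=
  fun P => Efrak (i + 1) P - Efrak i P + Delta c i P

/-- The Chevalley operator `f_i^T = B(i) - E(i) + x_i·Δ_i`. -/
def fT {n : ℕ} (c : ZMod n → ℚ) (i : ZMod n) : Op n :=
  fun P => Bop (Raiz.simple i) P - Eop (Raiz.simple i) P + X (Raiz.simple i) * Delta c i P

/-- The affine Cartan matrix of type `Ã_{n-1}` (for `n ≥ 2`): `a_ii = 2`;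
`a_ij = -1` if `j = i±1` and `n ≠ 2`; `a_ij = -2` if `n = 2` and `j = i+1 ≠ i`;
`a_ij = 0` otherwise. -/
def cartan (n : ℕ) (i j : ZMod n) : ℤ :=
  if j = i then 2
  else if n = 2 then -2
  else if j = i + 1 ∨ j = i - 1 then -1
  else 0

/-- The projection `ζ : R⁺(m) → R⁺(n)` for `n ∣ m`: the class of `(p,q)` modulo `m`
is sent to its class modulo `n`. -/
def Raiz.zetaR {n m : ℕ} (h : n ∣ m) : Raiz m → Raiz n :=
  fun θ => (ZMod.castHom h (ZMod n) θ.1, θ.2)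

/-- The induced `ℚ`-algebra homomorphism `ζ : ℚ[x_ϑ : ϑ ∈ R⁺(m)] → ℚ[x_θ : θ ∈ R⁺(n)]`,
`x_ϑ ↦ x_{ζ(ϑ)}`. -/
def zeta {n m : ℕ} (h : n ∣ m) : Pol m →ₐ[ℚ] Pol n :=
  MvPolynomial.rename (Raiz.zetaR h)

/-- The natural-number representatives in `[0, m)` of the residues `≡ i (mod n)`:
for `n ∣ m` these enumerate (via `ℕ → ZMod m`) exactly the classes `j ∈ ℤ/mℤ` with
`j ≡ i (mod n)`. -/
def fiber (n m : ℕ) (i : ZMod n) : Finset ℕ :=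
  (Finset.range m).filter (fun t => ((t : ZMod n) = i))

/-- All raiz of level `n` with length at most `m`. -/
def raizUpTo (n m : ℕ) : Finset (Raiz n) :=
  ((Finset.range n).image (fun a : ℕ => ((a : ZMod n)))) ×ˢ
    ((Finset.range m).image (fun l : ℕ => (⟨l + 1, Nat.succ_pos l⟩ : ℕ+)))

open Classical in
/-- Kostant partitions of the dimension vector `γ`, as multisets `κ` of raiz with
`Σ_{θ ∈ κ} dim θ = γ`; the parameter `m` bounds the lengths of parts and the
multiplicities, so for `Σ_j γ(j) ≤ m` this is the set of all Kostant partitions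
of `γ`. -/
def kostant (n : ℕ) (γ : ZMod n → ℕ) (m : ℕ) : Finset (Multiset (Raiz n)) :=
  ((m • (raizUpTo n m).val).powerset.toFinset).filter
    (fun κ => ∀ j, (κ.map (fun θ => θ.dimAt j)).sum = γ j)

/-- The monomial `x^κ` attached to a Kostant partition `κ`. -/
def xPow {n : ℕ} (κ : Multiset (Raiz n)) : Pol n :=
  (κ.map (fun θ => (X θ : Pol n))).prod

/-- `P_n = Σ_{κ ∈ 𝔎(α_n)} (-1)^{K(κ)+1} x^κ`: the sum is over all Kostant partitions
of the all-ones dimension vector `α_n` (all of whose parts have length `≤ n` and which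
have at most `n` parts). -/
def Ppoly (n : ℕ) : Pol n :=
  ∑ κ ∈ kostant n (fun _ => 1) n, ((-1 : ℚ) ^ (Multiset.card κ + 1)) • xPow κ

open Classical in
/-- `a_p = Σ_{θ : dim θ = p·α_n} Ẽ(θ)` for `p ≥ 1` (a finite sum: such `θ` have
length `p·n`). -/
def aPos (n p : ℕ) : Op n :=
  fun P => ∑ θ ∈ (raizUpTo n (p * n)).filter (fun θ => ∀ j, θ.dimAt j = p), Etil θ P

/-- `a_{-p}`: `c₀` times the operator of multiplication by `ζ(P_{pn})`, for `p ≥ 1`. -/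
def aNeg (n : ℕ) (c₀ : ℚ) (p : ℕ) : Op n :=
  fun P => c₀ • (zeta (dvd_mul_left n p) (Ppoly (p * n)) * P)

end

namespace SerreAux

variable {n : ℕ}

theorem diffOp_superset (c : Raiz n → Pol n) (P : Pol n) (S : Finset (Raiz n))
    (hS : P.vars ⊆ S) : diffOp c P = ∑ η ∈ S, c η * pderiv η P := by
  refine Finset.sum_subset hS fun η _ hη => ?_
  rw [pderiv_eq_zero_of_notMem_vars hη, mul_zero]

theorem diffOp_zero (c : Raiz n → Pol n) : diffOp c (0 : Pol n) = 0 := by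
  simp [diffOp, vars_0]

theorem diffOp_C (c : Raiz n → Pol n) (r : ℚ) : diffOp c (C r) = 0 := by
  simp [diffOp, vars_C]

theorem diffOp_one (c : Raiz n → Pol n) : diffOp c (1 : Pol n) = 0 := by
  simp [diffOp, vars_one]

theorem diffOp_X (c : Raiz n → Pol n) (θ : Raiz n) : diffOp c (X θ) = c θ := by
  simp [diffOp, vars_X, pderiv_X_self]

theorem diffOp_add (c : Raiz n → Pol n) (P Q : Pol n) :
    diffOp c (P + Q) = diffOp c P + diffOp c Q := by
  classical
  rw [diffOp_superset c (P + Q) (P.vars ∪ Q.vars) (vars_add_subset P Q),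
    diffOp_superset c P (P.vars ∪ Q.vars) Finset.subset_union_left,
    diffOp_superset c Q (P.vars ∪ Q.vars) Finset.subset_union_right,
    ← Finset.sum_add_distrib]
  exact Finset.sum_congr rfl fun η _ => by rw [map_add, mul_add]

theorem diffOp_neg (c : Raiz n → Pol n) (P : Pol n) :
    diffOp c (-P) = -diffOp c P := by
  unfold diffOp
  rw [vars_neg, ← Finset.sum_neg_distrib]
  exact Finset.sum_congr rfl fun η _ => by rw [map_neg, mul_neg]

theorem diffOp_sub (c : Raiz n → Pol n) (P Q : Pol n) :
    diffOp c (P - Q) = diffOp c P - diffOp c Q := by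
  rw [sub_eq_add_neg, diffOp_add, diffOp_neg, sub_eq_add_neg]

theorem diffOp_mul (c : Raiz n → Pol n) (P Q : Pol n) :
    diffOp c (P * Q) = diffOp c P * Q + P * diffOp c Q := by
  classical
  rw [diffOp_superset c (P * Q) (P.vars ∪ Q.vars) (vars_mul P Q),
    diffOp_superset c P (P.vars ∪ Q.vars) Finset.subset_union_left,
    diffOp_superset c Q (P.vars ∪ Q.vars) Finset.subset_union_right,
    Finset.sum_mul, Finset.mul_sum, ← Finset.sum_add_distrib]
  refine Finset.sum_congr rfl fun η _ => ?_
  rw [pderiv_mul]; ring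

theorem diffOp_ite (c : Raiz n → Pol n) (p : Prop) [Decidable p] (A B : Pol n) :
    diffOp c (if p then A else B) = if p then diffOp c A else diffOp c B :=
  apply_ite _ _ _ _

theorem diffOp_coeff_zero {c : Raiz n → Pol n} (h : ∀ η, c η = 0) :
    diffOp c = (0 : Op n) := by
  funext P
  rw [Pi.zero_apply]
  exact Finset.sum_eq_zero fun η _ => by rw [h, zero_mul]

/-- The coefficient function of the commutator of two `diffOp`s. -/
noncomputable def brC (c c' : Raiz n → Pol n) : Raiz n → Pol n :=
  fun ζ => diffOp c (c' ζ) - diffOp c' (c ζ)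

theorem brak_diffOp (c c' : Raiz n → Pol n) :
    brak (diffOp c) (diffOp c') = diffOp (brC c c') := by
  funext P
  show diffOp c (diffOp c' P) - diffOp c' (diffOp c P) = _
  induction P using MvPolynomial.induction_on with
  | C a => rw [diffOp_C, diffOp_C, diffOp_zero, diffOp_zero, diffOp_C, sub_zero]
  | add P Q hP hQ =>
      simp only [diffOp_add]
      linear_combination hP + hQ
  | mul_X P s hP =>
      simp only [diffOp_mul, diffOp_add, diffOp_X, brC] at *
      linear_combination (X s : Pol n) * hP

/-- The coefficient function of `eT i`. -/
noncomputable def cE (i : ZMod n) : Raiz n → Pol n := fun η =>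
  if η = Raiz.simple i then 1
  else if η.1 = (Raiz.simple i).1 ∧ (Raiz.simple i).2 < η.2 then
    X ((Raiz.beg (Raiz.simple i) - 1, η.2 - (Raiz.simple i).2) : Raiz n)
  else 0

theorem eT_eq (i : ZMod n) : eT i = diffOp (cE i) := rfl

theorem cE_ne {i : ZMod n} {η : Raiz n} (h : η.1 ≠ i) : cE i η = 0 := by
  unfold cE
  rw [if_neg, if_neg]
  · exact fun hc => h hc.1
  · intro hc; exact h (by rw [hc]; rfl)

theorem diffOp_applied_cE (c : Raiz n → Pol n) (i : ZMod n) (η : Raiz n) :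
    diffOp c (cE i η) = if η.1 = i ∧ 1 < η.2 then c (i - 1, η.2 - 1) else 0 := by
  have hbeg : Raiz.beg (Raiz.simple i) - 1 = i - 1 := by
    simp [Raiz.beg, Raiz.simple]
  unfold cE
  by_cases h1 : η = Raiz.simple i
  · subst h1
    rw [if_pos rfl, diffOp_one]
    simp [Raiz.simple]
  · rw [if_neg h1, diffOp_ite, diffOp_X, diffOp_zero, hbeg]
    rfl

end SerreAux

/-- Serre relations for the operators `e_i^T = Ẽ(i)`: if `j ≠ i, i±1` then
`[e_i^T, e_j^T] = 0`; if `n ≠ 2` and `j = i±1` then `[e_i^T, [e_i^T, e_j^T]] = 0`;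
and if `n = 2` and `j = i+1` then `[e_i^T, [e_i^T, [e_i^T, e_j^T]]] = 0`. -/
theorem serre_relations_eT {n : ℕ} (hn : 2 ≤ n) (i j : ZMod n) :
    (j ≠ i ∧ j ≠ i + 1 ∧ j ≠ i - 1 → brak (eT i) (eT j) = 0) ∧
    (n ≠ 2 → (j = i + 1 ∨ j = i - 1) →
      brak (eT i) (brak (eT i) (eT j)) = 0) ∧
    (n = 2 → j = i + 1 →
      brak (eT i) (brak (eT i) (brak (eT i) (eT j))) = 0) := by
  open SerreAux in
  have h10 : (1 : ZMod n) ≠ 0 := by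
    intro h
    rw [show ((1 : ZMod n)) = ((1 : ℕ) : ZMod n) by norm_cast] at h
    have h2 := (ZMod.natCast_eq_zero_iff 1 n).mp h
    have := Nat.le_of_dvd one_pos h2
    omega
  have h20 : n ≠ 2 → (2 : ZMod n) ≠ 0 := by
    intro hn2 h
    rw [show ((2 : ZMod n)) = ((2 : ℕ) : ZMod n) by norm_cast] at h
    have h2 := (ZMod.natCast_eq_zero_iff 2 n).mp h
    have := Nat.le_of_dvd two_pos h2
    omega
  refine ⟨?_, ?_, ?_⟩
  · rintro ⟨h1, h2, h3⟩
    have hd1 : j - 1 ≠ i := fun h => h2 (by rw [← h]; ring)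
    have hd2 : i - 1 ≠ j := fun h => h3 h.symm
    rw [eT_eq, eT_eq, brak_diffOp]
    refine diffOp_coeff_zero fun ζ => ?_
    simp [brC, diffOp_applied_cE, cE_ne, hd1, hd2]
  · intro hn2 hj
    have h2z := h20 hn2
    have hC : i - 1 ≠ i := fun h => h10 (by linear_combination -h)
    have hD : i + 1 ≠ i := fun h => h10 (by linear_combination h)
    rcases hj with hj | hj <;> subst hj
    · have hA : i - 1 ≠ i + 1 := fun h => h2z (by linear_combination -h)
      rw [eT_eq, eT_eq, brak_diffOp, brak_diffOp]
      refine diffOp_coeff_zero fun ζ => ?_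
      simp [brC, diffOp_applied_cE, diffOp_sub, diffOp_neg, diffOp_add,
        diffOp_ite, diffOp_zero, diffOp_one, cE_ne, hA, hC, hD]
    · have hF : i - 1 - 1 ≠ i := fun h => h2z (by linear_combination -h)
      rw [eT_eq, eT_eq, brak_diffOp, brak_diffOp]
      refine diffOp_coeff_zero fun ζ => ?_
      simp [brC, diffOp_applied_cE, diffOp_sub, diffOp_neg, diffOp_add,
        diffOp_ite, diffOp_zero, diffOp_one, cE_ne, hF, hC, hD]
  · intro hn2 hj
    subst hn2
    subst hj
    have e2 : (2 : ZMod 2) = 0 := by decide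
    have h102 : (1 : ZMod 2) ≠ 0 := by decide
    have hH : i - 1 = i + 1 := by linear_combination -e2
    have hD : i + 1 ≠ i := fun h => h102 (by linear_combination h)
    rw [eT_eq, eT_eq, brak_diffOp, brak_diffOp, brak_diffOp]
    refine diffOp_coeff_zero fun ζ => ?_
    simp [brC, diffOp_applied_cE, diffOp_sub, diffOp_neg, diffOp_add,
      diffOp_ite, diffOp_zero, diffOp_one, cE_ne, hH, hD]
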